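/- arXiv:1305.5500 — 3 statements merged into one kernel-verified Lean document; each statement's English description precedes it below -/
import Mathlib

section
/- Let ζ(ν) be the moment matrix of a probability distribution ν on {-1,1}^k, let 0 < δ < 1, and let ζ = (1−δ)·ζ(ν) + δ·I_{k+1}. Then the covariance matrix Σ of ζ, defined by Σ_{ij} = ζ(i,j) − ζ(0,i)·ζ(0,j) for i,j ∈ [k], is symmetric positive definite with every eigenvalue at least δ. -/
/-!
With `c = 1 - δ`, the smoothed covariance is `Σ = c M₂ + δ I - (c m)(c m)ᵀ`, where `M₂` and `m`
are the second-moment matrix and the mean of `ν`; on the diagonal this holds because the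
coordinates are `±1`. The identity `c M₂ - c² m mᵀ = c (M₂ - m mᵀ) + c (1 - c) m mᵀ` exhibits
`c M₂ - c² m mᵀ` as positive semidefinite, since the covariance `M₂ - m mᵀ = E[(x - m)(x - m)ᵀ]`
of `ν` is. Hence `Σ ⪰ δ I`.
-/

open Matrix

section Moments

variable {Ω n : Type*} [Fintype Ω] (w : Ω → ℝ) (v : Ω → n → ℝ)

noncomputable def weightedMean : n → ℝ :=
  ∑ b, w b • v b

noncomputable def secondMomentMatrix : Matrix n n ℝ :=
  ∑ b, w b • vecMulVec (v b) (v b)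

noncomputable def covarianceMatrix : Matrix n n ℝ :=
  secondMomentMatrix w v - vecMulVec (weightedMean w v) (weightedMean w v)

theorem weightedMean_apply (i : n) : weightedMean w v i = ∑ b, w b * v b i := by
  simp [weightedMean, Finset.sum_apply]

theorem secondMomentMatrix_apply (i j : n) :
    secondMomentMatrix w v i j = ∑ b, w b * v b i * v b j := by
  simp [secondMomentMatrix, Matrix.sum_apply, vecMulVec_apply, mul_assoc]

variable {w}

theorem covarianceMatrix_eq_sum (hw1 : ∑ b, w b = 1) :
    covarianceMatrix w v =
      ∑ b, w b • vecMulVec (v b - weightedMean w v) (v b - weightedMean w v) := by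
  set m := weightedMean w v
  have expand : ∀ b i j, w b * ((v b i - m i) * (v b j - m j)) =
      w b * v b i * v b j - m j * (w b * v b i) - m i * (w b * v b j) + m i * m j * w b :=
    fun b i j => by ring
  ext i j
  simp only [covarianceMatrix, Matrix.sub_apply, Matrix.sum_apply, Matrix.smul_apply,
    vecMulVec_apply, Pi.sub_apply, smul_eq_mul, expand, Finset.sum_add_distrib,
    Finset.sum_sub_distrib, ← Finset.mul_sum, hw1, secondMomentMatrix_apply,
    ← weightedMean_apply, m]
  ring

theorem posSemidef_covarianceMatrix [Finite n] (hw0 : ∀ b, 0 ≤ w b) (hw1 : ∑ b, w b = 1) :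
    (covarianceMatrix w v).PosSemidef := by
  rw [covarianceMatrix_eq_sum v hw1]
  exact posSemidef_sum _ fun b _ => (posSemidef_vecMulVec_self_star _).smul (hw0 b)

theorem posSemidef_smul_secondMomentMatrix_sub_vecMulVec_smul_weightedMean [Finite n]
    (hw0 : ∀ b, 0 ≤ w b) (hw1 : ∑ b, w b = 1) {c : ℝ} (hc0 : 0 ≤ c) (hc1 : c ≤ 1) :
    (c • secondMomentMatrix w v -
      vecMulVec (c • weightedMean w v) (c • weightedMean w v)).PosSemidef := by
  set m := weightedMean w v
  have hdecomp : c • secondMomentMatrix w v - vecMulVec (c • m) (c • m) =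
      c • covarianceMatrix w v + (c * (1 - c)) • vecMulVec m m := by
    rw [covarianceMatrix, smul_vecMulVec, vecMulVec_smul]
    module
  rw [hdecomp]
  exact ((posSemidef_covarianceMatrix v hw0 hw1).smul hc0).add
    ((posSemidef_vecMulVec_self_star m).smul (by nlinarith))

end Moments

theorem Matrix.PosSemidef.smul_dotProduct_self_le_dotProduct_add_smul_one_mulVec
    {n : Type*} [Fintype n] [DecidableEq n] {A : Matrix n n ℝ} (hA : A.PosSemidef) (δ : ℝ)
    (x : n → ℝ) : δ * (x ⬝ᵥ x) ≤ x ⬝ᵥ (A + δ • 1) *ᵥ x := by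
  have hAx := hA.dotProduct_mulVec_nonneg x
  rw [star_trivial] at hAx
  rw [add_mulVec, smul_mulVec, one_mulVec, dotProduct_add, dotProduct_smul, smul_eq_mul]
  linarith

/-- For `ζ = (1−δ)·ζ(ν) + δ·I` with `ζ(ν)` the moment matrix of a
distribution `ν` on `{-1,1}^k` and `0 < δ < 1`, the covariance matrix
`Σ_{ij} = ζ(i,j) − ζ(0,i)ζ(0,j)` is symmetric positive definite with all
eigenvalues at least `δ`, i.e. `xᵀΣx ≥ δ‖x‖²` for all `x`. -/
theorem smoothed_covariance_posDef (k : ℕ) (δ : ℝ) (hδ0 : 0 < δ) (hδ1 : δ < 1)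
    (w : (Fin k → Bool) → ℝ) (hw0 : ∀ b, 0 ≤ w b) (hw1 : ∑ b : Fin k → Bool, w b = 1) :
    let sgn : Bool → ℝ := fun b => if b then 1 else -1
    let m1 : Fin k → ℝ := fun i => ∑ b : Fin k → Bool, w b * sgn (b i)
    let m2 : Fin k → Fin k → ℝ := fun i j => ∑ b : Fin k → Bool, w b * sgn (b i) * sgn (b j)
    let S : Matrix (Fin k) (Fin k) ℝ := Matrix.of fun i j =>
      (if i = j then 1 else (1 - δ) * m2 i j) - ((1 - δ) * m1 i) * ((1 - δ) * m1 j)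
    S.IsSymm ∧ S.PosDef ∧ ∀ x : Fin k → ℝ, δ * (x ⬝ᵥ x) ≤ x ⬝ᵥ S.mulVec x := by
  intro sgn m1 m2 S
  let v : (Fin k → Bool) → Fin k → ℝ := fun b i => sgn (b i)
  have hsgn : ∀ c, sgn c * sgn c = 1 := by intro c; cases c <;> norm_num [sgn]
  have hdiag : ∀ i, secondMomentMatrix w v i i = 1 := fun i => by
    simp only [secondMomentMatrix_apply, v, mul_assoc, hsgn, mul_one, hw1]
  have hS : S = ((1 - δ) • secondMomentMatrix w v -
      vecMulVec ((1 - δ) • weightedMean w v) ((1 - δ) • weightedMean w v)) + δ • 1 := by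
    have hm1 : ∀ i, m1 i = weightedMean w v i := fun i => (weightedMean_apply w v i).symm
    have hm2 : ∀ i j, m2 i j = secondMomentMatrix w v i j := fun i j =>
      (secondMomentMatrix_apply w v i j).symm
    ext i j
    simp only [S, of_apply, hm1, hm2, Matrix.add_apply, Matrix.sub_apply, Matrix.smul_apply,
      vecMulVec_apply, Pi.smul_apply, smul_eq_mul, one_apply]
    split_ifs with hij
    · rw [hij, hdiag]; ring
    · ring
  have hA := posSemidef_smul_secondMomentMatrix_sub_vecMulVec_smul_weightedMean v hw0 hw1
    (sub_nonneg.mpr hδ1.le) (sub_le_self 1 hδ0.le)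
  have hSpos : S.PosDef := hS ▸ PosDef.posSemidef_add hA (PosDef.one.smul hδ0)
  exact ⟨isHermitian_iff_isSymm.mp hSpos.isHermitian, hSpos,
    hS ▸ hA.smul_dotProduct_self_le_dotProduct_add_smul_one_mulVec δ⟩
end

section
/- Let X ∈ ℝ^{t×t} be a symmetric matrix and Z ∈ ℝ^t a vector with |X_{ij}| ≤ β/(t+1) for all i,j and |Z_i| ≤ β/(t+1) for all i, where 0 < β ≤ 1/2. Then for any d ≥ t+1 there exist vectors y_1,...,y_t ∈ [-1,1]^d such that ⟨y_i, y_j⟩ = X_{ij} for i ≠ j, ⟨y_i, y_i⟩ = X_{ii} + β, and ⟨y_i, 1⟩ = Z_i for all i, where 1 ∈ ℝ^d is the all-ones vector. -/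
/-!
Border `X + β I` by the row and column `(d, Z)`. The bounds on `X` and `Z` make the resulting
`(t+1) × (t+1)` matrix `Y` diagonally dominant, hence positive semidefinite by Gershgorin's
theorem, so `Y` is the Gram matrix of `t + 1` vectors in `ℝ^d`. The border vector has squared
norm `Y₀₀ = d = ‖𝟙‖²`, so after a reflection it is the all-ones vector `𝟙`; the remaining
vectors are the `y_i`, and `|y_i l| ≤ ‖y_i‖ = √(X_ii + β) ≤ 1`.
-/

open Finset Matrix

namespace Matrix

section DiagonallyDominant

variable {n : Type*} [Fintype n] [DecidableEq n]

theorem IsSymm.posSemidef_of_sum_abs_offDiag_le {A : Matrix n n ℝ} (hA : A.IsSymm)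
    (hdom : ∀ i, ∑ j ∈ univ.erase i, |A i j| ≤ A i i) : A.PosSemidef := by
  have hH : A.IsHermitian := isHermitian_iff_isSymm.mpr hA
  refine hH.posSemidef_iff_eigenvalues_nonneg.mpr fun i => ?_
  rw [Pi.zero_apply]
  have hμ : Module.End.HasEigenvalue (toLin' A) (hH.eigenvalues i) := by
    rw [Module.End.hasEigenvalue_iff_mem_spectrum, spectrum_toLin']
    exact hH.eigenvalues_mem_spectrum_real i
  obtain ⟨k, hk⟩ := eigenvalue_mem_ball hμ
  simp only [Metric.mem_closedBall, Real.dist_eq, Real.norm_eq_abs] at hk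
  linarith [(abs_le.mp hk).1, hdom k]

theorem IsSymm.posSemidef_add_diagonal {M : Matrix n n ℝ} (hM : M.IsSymm) {D : n → ℝ}
    (hD : ∀ i, ∑ j, |M i j| ≤ D i) : (M + diagonal D).PosSemidef := by
  refine (hM.add (isSymm_diagonal D)).posSemidef_of_sum_abs_offDiag_le fun i => ?_
  have hoff : ∑ j ∈ univ.erase i, |(M + diagonal D) i j| = ∑ j ∈ univ.erase i, |M i j| :=
    sum_congr rfl fun j hj => by
      rw [add_apply, diagonal_apply_ne _ (ne_of_mem_erase hj).symm, add_zero]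
  rw [hoff, sum_erase_eq_sub (mem_univ i), add_apply, diagonal_apply_eq]
  linarith [neg_abs_le (M i i), hD i]

end DiagonallyDominant

section Gram

variable {n E : Type*} [Fintype n] [DecidableEq n] [NormedAddCommGroup E]
  [InnerProductSpace ℝ E] [FiniteDimensional ℝ E] {A : Matrix n n ℝ}

open scoped MatrixOrder in
theorem PosSemidef.exists_gram_eq (hA : A.PosSemidef)
    (hn : Fintype.card n ≤ Module.finrank ℝ E) : ∃ v : n → E, gram ℝ v = A := by
  obtain ⟨f⟩ := Function.Embedding.nonempty_of_card_le (hn.trans (Fintype.card_fin _).ge)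
  have he : Orthonormal ℝ (stdOrthonormalBasis ℝ E ∘ f) :=
    (stdOrthonormalBasis ℝ E).orthonormal.comp f f.injective
  set B := CFC.sqrt A
  have hB : B.IsSymm :=
    isHermitian_iff_isSymm.mp (nonneg_iff_posSemidef.mp (CFC.sqrt_nonneg A)).isHermitian
  have hBB : B * B = A := CFC.sqrt_mul_sqrt_self A hA.nonneg
  refine ⟨fun j => ∑ k, B k j • (stdOrthonormalBasis ℝ E ∘ f) k, ?_⟩
  ext i j
  rw [gram_apply, he.inner_sum, ← hBB, mul_apply]
  simp [hB.apply i]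

theorem PosSemidef.exists_gram_eq_and_apply_eq (hA : A.PosSemidef)
    (hn : Fintype.card n ≤ Module.finrank ℝ E) (i₀ : n) (u : E) (hu : A i₀ i₀ = ‖u‖ ^ 2) :
    ∃ v : n → E, gram ℝ v = A ∧ v i₀ = u := by
  obtain ⟨v, hv⟩ := hA.exists_gram_eq hn
  have hnorm : ‖v i₀‖ = ‖u‖ := by
    rw [← pow_left_inj₀ (norm_nonneg _) (norm_nonneg _) two_ne_zero, ← hu, ← hv, gram_apply,
      real_inner_self_eq_norm_sq]
  refine ⟨fun i => Submodule.reflection (ℝ ∙ (v i₀ - u))ᗮ (v i), ?_,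
    Submodule.reflection_sub hnorm⟩
  ext i j
  rw [gram_apply, LinearIsometryEquiv.inner_map_map, ← gram_apply, hv]

end Gram

end Matrix

section MomentMatrix

variable {ι : Type*} [Fintype ι] [DecidableEq ι]

/-- The matrix `Y` of the paper; its row and column `0` is indexed by `Sum.inl ()`. -/
def momentMatrix (d β : ℝ) (X : Matrix ι ι ℝ) (Z : ι → ℝ) : Matrix (Unit ⊕ ι) (Unit ⊕ ι) ℝ :=
  fromBlocks 0 (replicateRow Unit Z) (replicateCol Unit Z) X +
    diagonal (Sum.elim (fun _ => d) fun _ => β)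

theorem posSemidef_momentMatrix {d β : ℝ} {X : Matrix ι ι ℝ} {Z : ι → ℝ} (hX : X.IsSymm)
    (hZ : ∑ i, |Z i| ≤ d) (hXZ : ∀ i, |Z i| + ∑ j, |X i j| ≤ β) :
    (momentMatrix d β X Z).PosSemidef := by
  refine (IsSymm.fromBlocks isSymm_zero (transpose_replicateRow Z) hX).posSemidef_add_diagonal ?_
  rintro (_ | i)
  · simpa using hZ
  · simpa using hXZ i

end MomentMatrix

/-- realizability of small moment data by vectors in `[-1,1]^d`. -/
theorem realizable_vectors (t d : ℕ) (β : ℝ) (hβ0 : 0 < β) (hβ : β ≤ 1 / 2)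
    (hd : t + 1 ≤ d) (X : Matrix (Fin t) (Fin t) ℝ) (hX : X.IsSymm) (Z : Fin t → ℝ)
    (hXb : ∀ i j, |X i j| ≤ β / (t + 1)) (hZb : ∀ i, |Z i| ≤ β / (t + 1)) :
    ∃ y : Fin t → Fin d → ℝ,
      (∀ i l, y i l ∈ Set.Icc (-1 : ℝ) 1) ∧
      (∀ i j, i ≠ j → ∑ l, y i l * y j l = X i j) ∧
      (∀ i, ∑ l, y i l * y i l = X i i + β) ∧
      (∀ i, ∑ l, y i l = Z i) := by
  set c := β / (t + 1) with hc
  have hc0 : 0 ≤ c := by positivity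
  have htc : t * c + c = β := by rw [hc]; field_simp
  have hsum : ∀ f : Fin t → ℝ, (∀ k, |f k| ≤ c) → ∑ k, |f k| ≤ t * c := fun f hf => by
    simpa using sum_le_sum fun k (_ : k ∈ univ) => hf k
  have hd' : (t : ℝ) + 1 ≤ d := by exact_mod_cast hd
  have hY := posSemidef_momentMatrix (d := d) (β := β) hX (by linarith [hsum Z hZb])
    fun i => by linarith [hsum (X i) (hXb i), hZb i]
  let ones : EuclideanSpace ℝ (Fin d) := WithLp.toLp 2 fun _ => 1
  obtain ⟨v, hv, hv₀⟩ := hY.exists_gram_eq_and_apply_eq (by simpa [add_comm] using hd)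
    (Sum.inl ()) ones (by simp [momentMatrix, ones, EuclideanSpace.norm_sq_eq])
  have hinner : ∀ a b, ∑ l, v a l * v b l = momentMatrix d β X Z a b := fun a b => by
    rw [← hv, gram_apply]; simp [PiLp.inner_apply, mul_comm]
  refine ⟨fun i => v (Sum.inr i), fun i l => ?_, fun i j hij => ?_, fun i => ?_, fun i => ?_⟩
  · have hnorm : ‖v (Sum.inr i)‖ ≤ 1 := by
      rw [← sq_le_one_iff₀ (norm_nonneg _), ← real_inner_self_eq_norm_sq, ← gram_apply, hv]
      simp [momentMatrix]
      linarith [(abs_le.mp (hXb i i)).2, mul_nonneg (Nat.cast_nonneg t) hc0]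
    exact abs_le.mp ((PiLp.norm_apply_le _ l).trans hnorm)
  · simp [hinner, momentMatrix, hij]
  · simp [hinner, momentMatrix]
  · simpa [hv₀, momentMatrix, ones] using hinner (Sum.inr i) (Sum.inl ())
end

section
/- Let ν be a probability distribution on {-1,1}^k whose coordinate biases are (ζ(1),...,ζ(k)) with each |ζ(j)| ≤ 1−√ε for ε ∈ (0,1/4), and let targets r_1,...,r_k satisfy |r_j − ζ(j)| ≤ ε and |r_j| ≤ 1−√ε. Then there exists a probability distribution ν' on {-1,1}^k with coordinate biases exactly (r_1,...,r_k) and total variation distance ‖ν − ν'‖₁ = O(k·√ε). -/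
/-!
Mix `ν` with weight `√ε` with the product distribution whose `j`-th bias is
`ζ(j) + (r_j − ζ(j)) / √ε`. This is a legitimate bias since `|r_j − ζ(j)| / √ε ≤ √ε`, and the
mixture has bias `(1 − √ε) ζ(j) + √ε ζ(j) + (r_j − ζ(j)) = r_j`. Mixing with weight `t` moves a
distribution by at most `2t` in `ℓ¹`, so the bound is in fact `2√ε`.
-/

open Finset

noncomputable section

namespace BiasCorrection

variable {ι : Type*}

def mix (t : ℝ) (w v : (ι → Bool) → ℝ) (b : ι → Bool) : ℝ :=
  (1 - t) * w b + t * v b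

theorem mix_nonneg {w v : (ι → Bool) → ℝ} (hw : ∀ b, 0 ≤ w b) (hv : ∀ b, 0 ≤ v b) {t : ℝ}
    (ht0 : 0 ≤ t) (ht1 : t ≤ 1) (b : ι → Bool) : 0 ≤ mix t w v b :=
  add_nonneg (mul_nonneg (by linarith) (hw b)) (mul_nonneg ht0 (hv b))

variable [Fintype ι]

def productWeight (q : ι → ℝ) (b : ι → Bool) : ℝ :=
  ∏ j, if b j then (1 + q j) / 2 else (1 - q j) / 2

theorem productWeight_nonneg {q : ι → ℝ} (hq : ∀ j, |q j| ≤ 1) (b : ι → Bool) :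
    0 ≤ productWeight q b :=
  prod_nonneg fun j _ => by
    have := abs_le.mp (hq j)
    split_ifs <;> linarith

variable [DecidableEq ι]

def bias (w : (ι → Bool) → ℝ) (j : ι) : ℝ :=
  ∑ b, w b * if b j then 1 else -1

theorem sum_prod_apply (f : ι → Bool → ℝ) :
    ∑ b : ι → Bool, ∏ j, f j (b j) = ∏ j, (f j true + f j false) := by
  simp only [← Fintype.prod_sum, Fintype.sum_bool]

theorem sum_prod_apply_mul_apply (f : ι → Bool → ℝ) (hf : ∀ j, f j true + f j false = 1)
    (g : Bool → ℝ) (i : ι) :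
    ∑ b : ι → Bool, (∏ j, f j (b j)) * g (b i) = f i true * g true + f i false * g false := by
  have hfactor (b : ι → Bool) :
      (∏ j, f j (b j)) * g (b i) = ∏ j, f j (b j) * if j = i then g (b j) else 1 := by
    rw [prod_mul_distrib, prod_ite_eq', if_pos (mem_univ i)]
  simp_rw [hfactor]
  rw [sum_prod_apply (fun j x => f j x * if j = i then g x else 1),
    Fintype.prod_eq_single i fun j hj => by simp [hj, hf j]]
  simp

theorem sum_productWeight (q : ι → ℝ) : ∑ b, productWeight q b = 1 := by
  simp only [productWeight]
  rw [sum_prod_apply (fun j x => if x then (1 + q j) / 2 else (1 - q j) / 2)]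
  exact prod_eq_one fun j _ => by simp only [Bool.false_eq_true, if_true, if_false]; ring

theorem bias_productWeight (q : ι → ℝ) (i : ι) : bias (productWeight q) i = q i := by
  simp only [bias, productWeight]
  rw [sum_prod_apply_mul_apply (fun j x => if x then (1 + q j) / 2 else (1 - q j) / 2)
    (fun j => by simp only [Bool.false_eq_true, if_true, if_false]; ring)
    (fun x => if x then 1 else -1)]
  simp only [Bool.false_eq_true, if_true, if_false]
  ring

theorem bias_mix (t : ℝ) (w v : (ι → Bool) → ℝ) (j : ι) :
    bias (mix t w v) j = (1 - t) * bias w j + t * bias v j := by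
  simp only [bias, mix, add_mul, mul_assoc, sum_add_distrib, ← mul_sum]

theorem sum_mix {w v : (ι → Bool) → ℝ} (hw : ∑ b, w b = 1) (hv : ∑ b, v b = 1) (t : ℝ) :
    ∑ b, mix t w v b = 1 := by
  simp only [mix, sum_add_distrib, ← mul_sum, hw, hv]
  ring

theorem sum_abs_sub_mix_le {w v : (ι → Bool) → ℝ} (hw : ∀ b, 0 ≤ w b) (hv : ∀ b, 0 ≤ v b)
    (hw1 : ∑ b, w b = 1) (hv1 : ∑ b, v b = 1) {t : ℝ} (ht : 0 ≤ t) :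
    ∑ b, |w b - mix t w v b| ≤ 2 * t := by
  have hpoint (b : ι → Bool) : |w b - mix t w v b| ≤ t * w b + t * v b := by
    have hsub : w b - mix t w v b = t * (w b - v b) := by rw [mix]; ring
    rw [hsub, abs_mul, abs_of_nonneg ht, ← mul_add]
    exact mul_le_mul_of_nonneg_left
      (abs_sub_le_iff.mpr ⟨by linarith [hv b], by linarith [hw b]⟩) ht
  calc ∑ b, |w b - mix t w v b| ≤ ∑ b, (t * w b + t * v b) := sum_le_sum fun b _ => hpoint b
    _ = 2 * t := by rw [sum_add_distrib, ← mul_sum, ← mul_sum, hw1, hv1]; ring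

theorem exists_bias_eq_of_abs_sub_le {w : (ι → Bool) → ℝ} (hw : ∀ b, 0 ≤ w b)
    (hw1 : ∑ b, w b = 1) (r : ι → ℝ) {t : ℝ} (ht0 : 0 < t) (ht1 : t ≤ 1)
    (hr : ∀ j, |bias w j| + |r j - bias w j| / t ≤ 1) :
    ∃ w' : (ι → Bool) → ℝ, (∀ b, 0 ≤ w' b) ∧ ∑ b, w' b = 1 ∧ (∀ j, bias w' j = r j) ∧
      ∑ b, |w b - w' b| ≤ 2 * t := by
  set q : ι → ℝ := fun j => bias w j + (r j - bias w j) / t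
  have hq (j : ι) : |q j| ≤ 1 := by
    calc |q j| ≤ |bias w j| + |(r j - bias w j) / t| := abs_add_le _ _
      _ = |bias w j| + |r j - bias w j| / t := by rw [abs_div, abs_of_pos ht0]
      _ ≤ 1 := hr j
  refine ⟨mix t w (productWeight q), mix_nonneg hw (productWeight_nonneg hq) ht0.le ht1,
    sum_mix hw1 (sum_productWeight q) t, fun j => ?_,
    sum_abs_sub_mix_le hw (productWeight_nonneg hq) hw1 (sum_productWeight q) ht0.le⟩
  rw [bias_mix, bias_productWeight]
  simp only [q]
  field_simp
  ring

end BiasCorrection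

end

open BiasCorrection in
/-- bias correction. There is an absolute constant `c` such that: given a
distribution `ν` on `{-1,1}^k` with coordinate biases `ζ(j)` bounded by `1−√ε` in
absolute value, and target biases `r_j` with `|r_j − ζ(j)| ≤ ε` and `|r_j| ≤ 1−√ε`,
there is a distribution `ν'` with coordinate biases exactly `r_j` and
`‖ν − ν'‖₁ ≤ c·k·√ε`. -/
theorem bias_correction :
    ∃ c : ℝ, 0 < c ∧
      ∀ (k : ℕ) (ε : ℝ), 0 < ε → ε < 1 / 4 →
      ∀ (w : (Fin k → Bool) → ℝ),
        (∀ b, 0 ≤ w b) → (∑ b : Fin k → Bool, w b = 1) →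
      ∀ (r : Fin k → ℝ),
        (∀ j, |∑ b : Fin k → Bool, w b * (if b j then (1 : ℝ) else -1)| ≤ 1 - Real.sqrt ε) →
        (∀ j, |r j - ∑ b : Fin k → Bool, w b * (if b j then (1 : ℝ) else -1)| ≤ ε) →
        (∀ j, |r j| ≤ 1 - Real.sqrt ε) →
        ∃ w' : (Fin k → Bool) → ℝ,
          (∀ b, 0 ≤ w' b) ∧ (∑ b : Fin k → Bool, w' b = 1) ∧
          (∀ j, ∑ b : Fin k → Bool, w' b * (if b j then (1 : ℝ) else -1) = r j) ∧
          (∑ b : Fin k → Bool, |w b - w' b|) ≤ c * k * Real.sqrt ε := by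
  refine ⟨2, two_pos, fun k ε hε hε4 w hw hw1 r hζ hr _ => ?_⟩
  rcases Nat.eq_zero_or_pos k with rfl | hk
  · exact ⟨w, hw, hw1, fun j => j.elim0, by simp⟩
  have hs0 : 0 < Real.sqrt ε := Real.sqrt_pos.mpr hε
  have hs1 : Real.sqrt ε ≤ 1 := Real.sqrt_le_one.mpr (by linarith)
  have hbias (j : Fin k) : |bias w j| + |r j - bias w j| / Real.sqrt ε ≤ 1 := by
    have hζj : |bias w j| ≤ 1 - Real.sqrt ε := hζ j
    have hrj : |r j - bias w j| ≤ ε := hr j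
    have hεs : ε / Real.sqrt ε = Real.sqrt ε := Real.div_sqrt
    linarith [hεs ▸ div_le_div_of_nonneg_right hrj hs0.le]
  obtain ⟨w', hw', hw'1, hbias', hdist⟩ := exists_bias_eq_of_abs_sub_le hw hw1 r hs0 hs1 hbias
  have hk1 : (1 : ℝ) ≤ k := by exact_mod_cast hk
  refine ⟨w', hw', hw'1, hbias', hdist.trans ?_⟩
  nlinarith
end
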